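/- arXiv:2207.01986 — 2 statements merged into one kernel-verified Lean document; each statement's English description precedes it below -/
import Mathlib

section
/- Let Q be a set, D : Q × Q → ℝ with D(q,q) = 0 for all q, and I : ℝ × Q → ℝ such that for each fixed q ∈ Q the map t ↦ I(t,q) is differentiable with derivative ∂ₜI(t,q) continuous in t. Let t₀ ≤ t₁, let q₀ ∈ Q, and suppose q₁ ∈ Q minimizes q ↦ I(t₁, q) + D(q₀, q) over Q. Then I(t₁, q₁) + D(q₀, q₁) − I(t₀, q₀) ≤ ∫_{t₀}^{t₁} ∂ₜI(s, q₀) ds. (Upper discrete energy estimate for one incremental step.) -/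
/-- Upper discrete energy estimate for one incremental step: if `q₁` minimizes
`q ↦ I(t₁, q) + D(q₀, q)`, then
`I(t₁,q₁) + D(q₀,q₁) - I(t₀,q₀) ≤ ∫_{t₀}^{t₁} ∂ₜI(s, q₀) ds`. -/
theorem upper_discrete_energy_estimate
    {Q : Type*} (D : Q → Q → ℝ) (hD : ∀ q, D q q = 0)
    (I I' : ℝ → Q → ℝ)
    (hderiv : ∀ (q : Q) (t : ℝ), HasDerivAt (fun s => I s q) (I' t q) t)
    (hcont : ∀ q : Q, Continuous fun t => I' t q)
    (t₀ t₁ : ℝ) (ht : t₀ ≤ t₁) (q₀ q₁ : Q)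
    (hmin : ∀ q : Q, I t₁ q₁ + D q₀ q₁ ≤ I t₁ q + D q₀ q) :
    I t₁ q₁ + D q₀ q₁ - I t₀ q₀ ≤ ∫ s in t₀..t₁, I' s q₀ := by
  have hFTC : ∫ s in t₀..t₁, I' s q₀ = I t₁ q₀ - I t₀ q₀ := by
    apply intervalIntegral.integral_eq_sub_of_hasDerivAt
    · intro x _; exact hderiv q₀ x
    · exact ((hcont q₀).intervalIntegrable t₀ t₁)
  have := hmin q₀
  rw [hD] at this
  linarith [this, hFTC]
end

section
/- Let Q be a set, D : Q × Q → ℝ with D(q,q) = 0 for all q, and I : ℝ × Q → ℝ such that for each fixed q the map t ↦ I(t,q) is differentiable with derivative ∂ₜI(t,q) continuous in t. Let 0 = t₀ < t₁ < ⋯ < t_K = T be a partition, let q₀ ∈ Q, and let q₁, …, q_K ∈ Q be such that for each k ∈ {1,…,K}, q_k minimizes q ↦ I(t_k, q) + D(q_{k−1}, q) over Q. Then the discrete energy inequality holds: I(t_K, q_K) + Σ_{k=1}^{K} D(q_{k−1}, q_k) ≤ I(t₀, q₀) + Σ_{k=1}^{K} ∫_{t_{k−1}}^{t_k} ∂ₜI(s,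 q_{k−1}) ds. -/
/-- Discrete energy inequality for the incremental minimization scheme: if for each
`k`, `q_{k+1}` minimizes `q ↦ I(t_{k+1}, q) + D(q_k, q)`, then the total energy plus
total dissipation is bounded by the initial energy plus the accumulated power of the
time-dependence. -/
theorem discrete_energy_inequality
    {Q : Type*} (D : Q → Q → ℝ) (hDrefl : ∀ q, D q q = 0)
    (I I' : ℝ → Q → ℝ)
    (hderiv : ∀ (q : Q) (t : ℝ), HasDerivAt (fun s => I s q) (I' t q) t)
    (hcont : ∀ q : Q, Continuous fun t => I' t q)
    (K : ℕ) (hK : 0 < K) (T : ℝ) (t : ℕ → ℝ)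
    (ht0 : t 0 = 0) (htK : t K = T)
    (hmono : ∀ k < K, t k < t (k + 1))
    (q : ℕ → Q)
    (hmin : ∀ k < K, ∀ q' : Q,
      I (t (k + 1)) (q (k + 1)) + D (q k) (q (k + 1)) ≤ I (t (k + 1)) q' + D (q k) q') :
    I (t K) (q K) + ∑ k ∈ Finset.range K, D (q k) (q (k + 1)) ≤
      I (t 0) (q 0) + ∑ k ∈ Finset.range K, ∫ s in (t k)..(t (k + 1)), I' s (q k) := by
  have hint : ∀ k, (∫ s in (t k)..(t (k + 1)), I' s (q k)) =
      I (t (k + 1)) (q k) - I (t k) (q k) := by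
    intro k
    exact intervalIntegral.integral_eq_sub_of_hasDerivAt
      (fun s _ => hderiv (q k) s)
      ((hcont (q k)).intervalIntegrable _ _)
  have step : ∀ k < K, I (t (k + 1)) (q (k + 1)) + D (q k) (q (k + 1)) ≤
      I (t k) (q k) + ∫ s in (t k)..(t (k + 1)), I' s (q k) := by
    intro k hk
    have h := hmin k hk (q k)
    rw [hDrefl, add_zero] at h
    rw [hint k]
    linarith
  have main : ∀ n ≤ K, I (t n) (q n) + ∑ k ∈ Finset.range n, D (q k) (q (k + 1)) ≤
      I (t 0) (q 0) + ∑ k ∈ Finset.range n, ∫ s in (t k)..(t (k + 1)), I' s (q k) := by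
    intro n hn
    induction n with
    | zero => simp
    | succ m ih =>
      have hm : m < K := hn
      have ih' := ih (le_of_lt hm)
      rw [Finset.sum_range_succ, Finset.sum_range_succ]
      have := step m hm
      linarith
  exact main K le_rfl
end
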